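/- For τ ∈ ℍ, the function h(τ) = m Γ(-1/2, 4π m^2 v) q^{-m^2} (with m a positive integer, v = Im τ, q = e^{2πiτ}) is annihilated by the weight 3/2 hyperbolic Laplacian: Δ_{3/2} h = (-v^2(∂²/∂u² + ∂²/∂v²) + (3i/2) v (∂/∂u + i ∂/∂v)) h = 0. -/
import Mathlib


open Real

open MeasureTheory Set Topology Filter

/-- The upper incomplete Gamma function `Γ(s,x) = ∫_x^∞ t^{s-1} e^{-t} dt`. -/
noncomputable def uGamma (s x : ℝ) : ℝ := ∫ t in Set.Ioi x, t ^ (s - 1) * Real.exp (-t)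

lemma integrableOn_uG {s a : ℝ} (hs : s ≤ 1) (ha : 0 < a) :
    IntegrableOn (fun t : ℝ => t ^ (s - 1) * Real.exp (-t)) (Set.Ioi a) := by
  have hcont : ContinuousOn (fun t : ℝ => t ^ (s - 1) * Real.exp (-t)) (Set.Ioi a) := by
    intro t ht
    exact ((Real.continuousAt_rpow_const t _ (Or.inl (ne_of_gt (ha.trans ht)))).mul
      (Real.continuous_exp.comp continuous_neg).continuousAt).continuousWithinAt
  have hg : IntegrableOn (fun t : ℝ => a ^ (s - 1) * Real.exp (-t)) (Set.Ioi a) := by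
    have h1 : IntegrableOn (fun t : ℝ => Real.exp (-t)) (Set.Ioi a) := by
      simpa using exp_neg_integrableOn_Ioi a one_pos
    exact h1.const_mul _
  refine Integrable.mono' hg (hcont.aestronglyMeasurable measurableSet_Ioi) ?_
  refine (ae_restrict_iff' measurableSet_Ioi).2 (Filter.Eventually.of_forall fun t ht => ?_)
  have ht' : 0 < t := ha.trans ht
  rw [Real.norm_eq_abs, abs_of_nonneg (by positivity)]
  exact mul_le_mul_of_nonneg_right
    (Real.rpow_le_rpow_of_nonpos ha (le_of_lt ht) (by linarith)) (Real.exp_pos _).le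

lemma hasDerivAt_uGamma {s x : ℝ} (hs : s ≤ 1) (hx : 0 < x) :
    HasDerivAt (uGamma s) (-(x ^ (s - 1) * Real.exp (-x))) x := by
  set f : ℝ → ℝ := fun t => t ^ (s - 1) * Real.exp (-t) with hf
  have hcontOn : ContinuousOn f (Set.Ioi 0) := fun t ht =>
    ((Real.continuousAt_rpow_const t _ (Or.inl (ne_of_gt ht))).mul
      (Real.continuous_exp.comp continuous_neg).continuousAt).continuousWithinAt
  have hcontAt : ContinuousAt f x :=
    (Real.continuousAt_rpow_const x _ (Or.inl (ne_of_gt hx))).mul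
      (Real.continuous_exp.comp continuous_neg).continuousAt
  have hint : IntervalIntegrable f volume x (x + 1) := by
    apply ContinuousOn.intervalIntegrable
    apply hcontOn.mono
    rw [Set.uIcc_of_le (by linarith)]
    intro t ht
    exact lt_of_lt_of_le hx ht.1
  have hmeas : StronglyMeasurableAtFilter f (𝓝 x) volume :=
    ContinuousOn.stronglyMeasurableAtFilter isOpen_Ioi hcontOn x hx
  have hd : HasDerivAt (fun y => (∫ t in y..(x + 1), f t) + uGamma s (x + 1)) (-f x) x :=
    (intervalIntegral.integral_hasDerivAt_left hint hmeas hcontAt).add_const _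
  have hev : (fun y => (∫ t in y..(x + 1), f t) + uGamma s (x + 1)) =ᶠ[𝓝 x] uGamma s := by
    filter_upwards [Ioo_mem_nhds hx (lt_add_one x)] with y hy
    rw [intervalIntegral.integral_of_le hy.2.le, uGamma, uGamma,
      ← setIntegral_union (Set.Ioc_disjoint_Ioi le_rfl) measurableSet_Ioi
        (((integrableOn_uG hs hy.1)).mono_set Set.Ioc_subset_Ioi_self)
        (integrableOn_uG hs (by linarith [hy.1])),
      Set.Ioc_union_Ioi_eq_Ioi hy.2.le]
  exact hd.congr_of_eventuallyEq hev.symm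

/-- `h(τ) = m Γ(-1/2, 4πm²v) q^{-m²}` as a function of `u, v` (`τ = u + iv`). -/
noncomputable def hterm (m : ℕ) (u v : ℝ) : ℂ :=
  (m : ℂ) * ((uGamma (-(1/2)) (4 * π * (m : ℝ) ^ 2 * v) : ℝ) : ℂ) *
    Complex.exp (-(2 * (π : ℂ) * Complex.I * (m : ℂ) ^ 2 * ((u : ℂ) + Complex.I * v)))

noncomputable def GG (r w : ℝ) : ℝ := uGamma (-(1/2)) (r * w)
noncomputable def gg (r w : ℝ) : ℝ := -((r * w) ^ ((-(1/2) : ℝ) - 1) * Real.exp (-(r * w))) * r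

/-- The function `h(τ) = m Γ(-1/2, 4πm²v) q^{-m²}` is annihilated by the weight `3/2`
hyperbolic Laplacian `Δ_{3/2} = -v²(∂²/∂u² + ∂²/∂v²) + (3i/2) v (∂/∂u + i ∂/∂v)`. -/
theorem laplacian_annihilates_nonholomorphic_term (m : ℕ) (hm : 0 < m) (u v : ℝ) (hv : 0 < v) :
    -(v : ℂ) ^ 2 *
        (deriv (fun u' : ℝ => deriv (fun u'' : ℝ => hterm m u'' v) u') u +
          deriv (fun v' : ℝ => deriv (fun v'' : ℝ => hterm m u v'') v') v)
      + (3 * Complex.I / 2) * (v : ℂ) *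
        (deriv (fun u' : ℝ => hterm m u' v) u + Complex.I * deriv (fun v' : ℝ => hterm m u v') v)
      = 0 := by
  have hπ := Real.pi_pos
  have hm' : (0:ℝ) < (m:ℝ) := by exact_mod_cast hm
  set r : ℝ := 4 * π * (m : ℝ) ^ 2 with hr_def
  have hr : 0 < r := by positivity
  have hrv : 0 < r * v := by positivity
  set α : ℂ := -(2 * (π : ℂ) * Complex.I * (m : ℂ) ^ 2) with hα
  set δ : ℂ := 2 * (π : ℂ) * (m : ℂ) ^ 2 with hδ
  -- rewrite of hterm
  have hre : ∀ u' v' : ℝ, hterm m u' v' =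
      (m : ℂ) * ((GG r v' : ℝ) : ℂ) * Complex.exp (α * u' + δ * v') := by
    intro u' v'
    unfold hterm GG
    rw [show 4 * π * (m : ℝ) ^ 2 * v' = r * v' from by rw [hr_def]]
    congr 1
    congr 1
    rw [hα, hδ]
    linear_combination (-(2 * (π:ℂ) * (m:ℂ) ^ 2 * (v':ℂ))) * Complex.I_sq
  -- u-derivatives
  have hu1 : ∀ (u' v' : ℝ),
      HasDerivAt (fun t : ℝ => hterm m t v') (α * hterm m u' v') u' := by
    intro u' v'
    have h0 : HasDerivAt
        (fun z : ℂ => (m : ℂ) * ((GG r v' : ℝ) : ℂ) * Complex.exp (α * z + δ * v'))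
        ((m : ℂ) * ((GG r v' : ℝ) : ℂ) *
          (Complex.exp (α * (u' : ℂ) + δ * v') * (α * 1))) (u' : ℂ) :=
      ((((hasDerivAt_id ((u' : ℝ) : ℂ)).const_mul α).add_const (δ * (v' : ℂ))).cexp).const_mul _
    have h1 := h0.comp_ofReal
    have h2 : (fun t : ℝ => hterm m t v') =
        fun t : ℝ => (m : ℂ) * ((GG r v' : ℝ) : ℂ) * Complex.exp (α * t + δ * v') :=
      funext fun t => hre t v'
    rw [h2, hre u' v']
    convert h1 using 1
    ring
  -- G and g derivatives
  have hlin : ∀ w : ℝ, HasDerivAt (fun t : ℝ => r * t) r w := fun w => by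
    simpa using (hasDerivAt_id w).const_mul r
  have hG : ∀ w : ℝ, 0 < w → HasDerivAt (GG r) (gg r w) w := by
    intro w hw
    exact (hasDerivAt_uGamma (s := -(1/2)) (by norm_num) (show 0 < r * w by positivity)).comp
      w (hlin w)
  have hg : ∀ w : ℝ, 0 < w → HasDerivAt (gg r)
      (-((((-(1/2) : ℝ) - 1) * (r * w) ^ ((-(1/2) : ℝ) - 1 - 1) * r) * Real.exp (-(r * w)) +
          (r * w) ^ ((-(1/2) : ℝ) - 1) * (Real.exp (-(r * w)) * (-r))) * r) w := by
    intro w hw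
    have hrw : (0:ℝ) < r * w := by positivity
    have hpow : HasDerivAt (fun t : ℝ => (r * t) ^ ((-(1/2) : ℝ) - 1))
        ((((-(1/2) : ℝ) - 1) * (r * w) ^ ((-(1/2) : ℝ) - 1 - 1)) * r) w :=
      (Real.hasDerivAt_rpow_const (Or.inl (ne_of_gt hrw))).comp w (hlin w)
    have hexp : HasDerivAt (fun t : ℝ => Real.exp (-(r * t))) (Real.exp (-(r * w)) * (-r)) w :=
      ((hlin w).neg).exp
    exact ((hpow.mul hexp).neg).mul_const r
  -- v-derivative (first)
  have hEc : ∀ w : ℝ, HasDerivAt (fun t : ℝ => Complex.exp (α * (u:ℂ) + δ * (t:ℂ)))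
      (Complex.exp (α * (u:ℂ) + δ * (w:ℂ)) * (δ * 1)) w := by
    intro w
    have h0 : HasDerivAt (fun z : ℂ => Complex.exp (α * (u:ℂ) + δ * z))
        (Complex.exp (α * (u:ℂ) + δ * (w:ℂ)) * (δ * 1)) (w : ℂ) :=
      (((hasDerivAt_id ((w:ℝ):ℂ)).const_mul δ).const_add (α * (u:ℂ))).cexp
    exact h0.comp_ofReal
  have hv1 : ∀ w : ℝ, 0 < w → HasDerivAt (fun t : ℝ => hterm m u t)
      (((m:ℂ) * ((gg r w : ℝ):ℂ)) * Complex.exp (α * (u:ℂ) + δ * (w:ℂ)) +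
        ((m:ℂ) * ((GG r w : ℝ):ℂ)) * (Complex.exp (α * (u:ℂ) + δ * (w:ℂ)) * (δ * 1))) w := by
    intro w hw
    have hGc : HasDerivAt (fun t : ℝ => ((GG r t : ℝ):ℂ)) ((gg r w : ℝ):ℂ) w :=
      (hG w hw).ofReal_comp
    have := (hGc.const_mul (m:ℂ)).mul (hEc w)
    have h2 : (fun t : ℝ => hterm m u t) =
        fun t : ℝ => ((m:ℂ) * ((GG r t : ℝ):ℂ)) * Complex.exp (α * (u:ℂ) + δ * (t:ℂ)) :=
      funext fun t => hre u t
    rw [h2]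
    exact this
  -- assemble
  set D : ℝ → ℂ := fun w =>
      ((m:ℂ) * ((gg r w : ℝ):ℂ)) * Complex.exp (α * (u:ℂ) + δ * (w:ℂ)) +
        ((m:ℂ) * ((GG r w : ℝ):ℂ)) * (Complex.exp (α * (u:ℂ) + δ * (w:ℂ)) * (δ * 1)) with hD_def
  have hD : HasDerivAt D
      (((m:ℂ) * ((-((((-(1/2) : ℝ) - 1) * (r * v) ^ ((-(1/2) : ℝ) - 1 - 1) * r) * Real.exp (-(r * v)) +
          (r * v) ^ ((-(1/2) : ℝ) - 1) * (Real.exp (-(r * v)) * (-r))) * r : ℝ):ℂ)) *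
            Complex.exp (α * (u:ℂ) + δ * (v:ℂ)) +
        ((m:ℂ) * ((gg r v : ℝ):ℂ)) * (Complex.exp (α * (u:ℂ) + δ * (v:ℂ)) * (δ * 1)) +
       (((m:ℂ) * ((gg r v : ℝ):ℂ)) * (Complex.exp (α * (u:ℂ) + δ * (v:ℂ)) * (δ * 1)) +
        ((m:ℂ) * ((GG r v : ℝ):ℂ)) * ((Complex.exp (α * (u:ℂ) + δ * (v:ℂ)) * (δ * 1)) * (δ * 1)))) v := by
    have hgc : HasDerivAt (fun t : ℝ => ((gg r t : ℝ):ℂ))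
        ((-((((-(1/2) : ℝ) - 1) * (r * v) ^ ((-(1/2) : ℝ) - 1 - 1) * r) * Real.exp (-(r * v)) +
          (r * v) ^ ((-(1/2) : ℝ) - 1) * (Real.exp (-(r * v)) * (-r))) * r : ℝ):ℂ) v :=
      (hg v hv).ofReal_comp
    have hGc : HasDerivAt (fun t : ℝ => ((GG r t : ℝ):ℂ)) ((gg r v : ℝ):ℂ) v :=
      (hG v hv).ofReal_comp
    exact ((hgc.const_mul (m:ℂ)).mul (hEc v)).add
      ((hGc.const_mul (m:ℂ)).mul ((hEc v).mul_const (δ * 1)))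
  have e1 : (fun v' : ℝ => deriv (fun v'' : ℝ => hterm m u v'') v') =ᶠ[𝓝 v] D := by
    filter_upwards [Ioi_mem_nhds hv] with w hw
    exact (hv1 w hw).deriv
  have h2v := e1.deriv_eq.trans hD.deriv
  have h2u : deriv (fun u' : ℝ => deriv (fun u'' : ℝ => hterm m u'' v) u') u
      = α * (α * hterm m u v) := by
    have hfun : (fun u' : ℝ => deriv (fun u'' : ℝ => hterm m u'' v) u')
        = fun u' : ℝ => α * hterm m u' v := funext fun u' => (hu1 u' v).deriv
    rw [hfun]
    exact ((hu1 u v).const_mul α).deriv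
  rw [h2u, h2v, (hu1 u v).deriv, (hv1 v hv).deriv, hre u v]
  -- final algebra
  have hαδ : α = -Complex.I * δ := by rw [hα, hδ]; ring
  have hrδ : (r:ℂ) = 2 * δ := by rw [hr_def, hδ]; push_cast; ring
  have hXY : ((r * v) ^ ((-(1/2) : ℝ) - 1 - 1)) * (r * v) = (r * v) ^ ((-(1/2) : ℝ) - 1) := by
    rw [← Real.rpow_add_one (ne_of_gt hrv)]
    norm_num
  have hXYc : (((r * v) ^ ((-(1/2) : ℝ) - 1 - 1) : ℝ) : ℂ) * ((r:ℂ) * (v:ℂ))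
      = (((r * v) ^ ((-(1/2) : ℝ) - 1) : ℝ) : ℂ) := by
    rw [show ((r:ℂ) * (v:ℂ)) = ((r * v : ℝ) : ℂ) by push_cast; ring, ← Complex.ofReal_mul, hXY]
  rw [hrδ] at hXYc
  simp only [gg]
  rw [hαδ]
  push_cast
  rw [hrδ]
  set M : ℂ := (m:ℂ)
  set V : ℂ := (v:ℂ)
  set E : ℂ := Complex.exp (-Complex.I * δ * (u:ℂ) + δ * V)
  set Gv : ℂ := ((GG r v : ℝ):ℂ)
  set X : ℂ := (((r * v) ^ ((-(1/2) : ℝ) - 1) : ℝ) : ℂ)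
  set Y : ℂ := (((r * v) ^ ((-(1/2) : ℝ) - 1 - 1) : ℝ) : ℂ)
  set e : ℂ := Complex.exp (-(2 * δ * V))
  linear_combination (-V^2 * δ^2 * M * Gv * E - 3 * δ * V * M * X * e * E) * Complex.I_sq
    + (-3 * δ * V * M * e * E) * hXYc
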